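/- arXiv:2310.03875 — 2 statements merged into one kernel-verified Lean document; each statement's English description precedes it below -/
import Mathlib

section
/- Let E be a second-countable topological graph. The collection 𝒞 = { Z(V) ⊆ ∂E : V ⊆ E^n Borel, n ∈ ℕ₀ } is a π-system (closed under finite intersections) which generates the Borel σ-algebra of the boundary path space ∂E. -/
open MeasureTheory Set

namespace TopGraph

universe u
variable {V E : Type u} (r s : E → V)

/-- Composability of a tuple of edges: the source of each edge is the range of the next. -/
def Comp (n : ℕ) (a : Fin n → E) : Prop :=
  ∀ i j : Fin n, (j : ℕ) = (i : ℕ) + 1 → s (a i) = r (a j)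

/-- The space `E^n` of paths of length `n`; `E^0` is the vertex space `V`. -/
def PathN : ℕ → Type u
  | 0 => V
  | n + 1 => {a : Fin (n + 1) → E // Comp r s (n + 1) a}

/-- The space `E^∞` of infinite paths. -/
def PathInf : Type u := {a : ℕ → E // ∀ i : ℕ, s (a i) = r (a (i + 1))}

/-- The edges of a finite path. -/
def edgeOf : ∀ {n : ℕ}, PathN r s n → Fin n → E
  | 0, _, i => absurd i.isLt (by omega)
  | _ + 1, q, i => q.1 i

/-- The source of a finite path (for a vertex, the vertex itself). -/
def srcFin : ∀ {n : ℕ}, PathN r s n → V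
  | 0, v => v
  | n + 1, q => s (q.1 ⟨n, Nat.lt_succ_self n⟩)

/-- The range of a finite path (for a vertex, the vertex itself). -/
def rngFin : ∀ {n : ℕ}, PathN r s n → V
  | 0, v => v
  | n + 1, q => r (q.1 ⟨0, Nat.succ_pos n⟩)

/-- Truncation `a ↦ a(n)` of a finite path, with `a(0) = r(a)`. -/
def truncFin : ∀ {m n : ℕ}, n ≤ m → PathN r s m → PathN r s n
  | 0, 0, _, q => q
  | _ + 1, 0, _, q => r (q.1 ⟨0, Nat.succ_pos _⟩)
  | 0, _ + 1, h, _ => absurd h (by omega)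
  | _ + 1, _ + 1, h, q =>
    ⟨fun i => q.1 (Fin.castLE h i), fun i j hij =>
      q.2 (Fin.castLE h i) (Fin.castLE h j) (by simpa using hij)⟩

/-- Truncation `a ↦ a(n)` of an infinite path. -/
def truncInf (a : PathInf r s) : ∀ n : ℕ, PathN r s n
  | 0 => r (a.1 0)
  | n + 1 => ⟨fun i => a.1 i, fun i j hij => by
      show s (a.1 (i : ℕ)) = r (a.1 (j : ℕ))
      rw [hij]
      exact a.2 (i : ℕ)⟩

/-- The finite path space `E* = ⊔ₙ E^n`. -/
def FinPath : Type u := Σ n : ℕ, PathN r s n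

/-- Truncation of a finite path, as a map of `E*`. -/
def ftrunc (p : FinPath r s) (k : ℕ) (h : k ≤ p.1) : FinPath r s :=
  ⟨k, truncFin r s h p.2⟩

section Topology

variable [TopologicalSpace V] [TopologicalSpace E]

instance instTopPathN : ∀ n : ℕ, TopologicalSpace (PathN r s n)
  | 0 => (inferInstance : TopologicalSpace V)
  | n + 1 => (inferInstance : TopologicalSpace {a : Fin (n + 1) → E // Comp r s (n + 1) a})

noncomputable instance instMeasPathN (n : ℕ) : MeasurableSpace (PathN r s n) := borel _

instance instTopPathInf : TopologicalSpace (PathInf r s) :=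
  (inferInstance : TopologicalSpace {a : ℕ → E // ∀ i : ℕ, s (a i) = r (a (i + 1))})

instance instTopFinPath : TopologicalSpace (FinPath r s) :=
  (inferInstance : TopologicalSpace (Σ n : ℕ, PathN r s n))

/-- A vertex is regular if it has a relatively compact open neighborhood `U` with
`r⁻¹(cl U)` compact and `r(r⁻¹(U)) = U`. -/
def RegularVertex (v : V) : Prop :=
  ∃ U : Set V, IsOpen U ∧ v ∈ U ∧ IsCompact (closure U) ∧
    IsCompact (r ⁻¹' closure U) ∧ r '' (r ⁻¹' U) = U

/-- The carrier of the boundary path space: finite or infinite paths. -/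
def BPathCarrier : Type u := FinPath r s ⊕ PathInf r s

/-- Length of a (possibly infinite) path, in `ℕ∞`. -/
def blen : BPathCarrier r s → ℕ∞
  | .inl p => (p.1 : ℕ∞)
  | .inr _ => ⊤

/-- Truncation `a ↦ a(n)` of a boundary path, `n ≤ |a|`, valued in `E*`. -/
def btrunc : ∀ (x : BPathCarrier r s) (n : ℕ), (n : ℕ∞) ≤ blen r s x → FinPath r s
  | .inl p, n, h => ftrunc r s p n (by simpa [blen] using h)
  | .inr a, n, _ => ⟨n, truncInf r s a n⟩

/-- The boundary path space `∂E`: singular finite paths together with infinite paths. -/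
def BPath : Type u :=
  {x : BPathCarrier r s //
    ∀ p : FinPath r s, x = Sum.inl p → ¬ RegularVertex r (srcFin r s p.2)}

/-- The cylinder sets `Z(S) = {a ∈ ∂E : a(n) ∈ S for some n ≤ |a|}`. -/
def ZSet (S : Set (FinPath r s)) : Set (BPath r s) :=
  {x | ∃ (n : ℕ) (h : (n : ℕ∞) ≤ blen r s x.val), btrunc r s x.val n h ∈ S}

/-- The topology on `∂E` generated by the base `{Z(U) \ Z(K) : U open, K compact}`. -/
instance instTopBPath : TopologicalSpace (BPath r s) :=
  TopologicalSpace.generateFrom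
    {A | ∃ (U K : Set (FinPath r s)), IsOpen U ∧ IsCompact K ∧
      A = ZSet r s U \ ZSet r s K}

noncomputable instance instMeasBPath : MeasurableSpace (BPath r s) := borel _

end Topology

/-- The backwards shift on finite paths (acting as the identity on vertices). -/
def shiftF : FinPath r s → FinPath r s
  | ⟨0, v⟩ => ⟨0, v⟩
  | ⟨1, q⟩ => ⟨0, (s (q.1 ⟨0, Nat.one_pos⟩) : PathN r s 0)⟩
  | ⟨n + 2, q⟩ =>
    ⟨n + 1, ⟨fun i => q.1 i.succ, fun i j hij =>
      q.2 i.succ j.succ (by simp [Fin.val_succ, hij])⟩⟩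

/-- The backwards shift on the boundary path carrier. -/
def shiftC : BPathCarrier r s → BPathCarrier r s
  | .inl p => .inl (shiftF r s p)
  | .inr a => .inr ⟨fun i => a.1 (i + 1), fun i => a.2 (i + 1)⟩

section Vertex

variable [TopologicalSpace V] [TopologicalSpace E]

/-- The set of vertices `E⁰ ⊆ ∂E`. -/
def VtxSet : Set (BPath r s) := {x | ∃ v : V, x.val = Sum.inl ⟨0, (v : PathN r s 0)⟩}

/-- The range map `r : ∂E → E⁰`. -/
def brng (x : BPath r s) : V :=
  match x.val with
  | .inl p => rngFin r s p.2
  | .inr a => r (a.1 0)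

end Vertex

section Measures

variable [TopologicalSpace V] [TopologicalSpace E]
variable [MeasurableSpace V] [MeasurableSpace E]

/-- `ν` is the (sheaf-theoretic) pullback of `μ` along `f`. -/
def IsPullback {X Y : Type*} [TopologicalSpace X] [TopologicalSpace Y]
    [MeasurableSpace X] [MeasurableSpace Y] (f : X → Y)
    (ν : Measure X) (μ : Measure Y) : Prop :=
  ∀ U : Set X, IsOpen U → Set.InjOn f U →
    ∀ B : Set X, B ⊆ U → MeasurableSet B → ν B = μ (f '' B)

/-- A measure `ν` on `∂E` is `β`-quasi-invariant: `σ*ν = e^β ν` on `∂E \ E⁰`, i.e.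
`ν(B) = e^{-β} ν(σ(B))` for Borel `B` inside an open set `U ⊆ ∂E \ E⁰` on which `σ`
is injective. -/
def QuasiInv (β : ℝ) (ν : Measure (BPath r s)) : Prop :=
  ∀ U : Set (BPath r s), IsOpen U → Disjoint U (VtxSet r s) →
    Set.InjOn (fun x : BPath r s => shiftC r s x.val) U →
    ∀ B : Set (BPath r s), B ⊆ U → MeasurableSet B →
      ν B = ENNReal.ofReal (Real.exp (-β)) *
        ν (Subtype.val ⁻¹' (shiftC r s '' (Subtype.val '' B)))

/-- A regular Borel measure `μ` on `E⁰` is `β`-sub-invariant: `Tμ ≤ e^β μ` with equality on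
the regular vertices, where `T = r_* s*`. -/
def SubInv (β : ℝ) (μ : Measure V) : Prop :=
  μ.Regular ∧ ∃ sμ : Measure E, sμ.Regular ∧ IsPullback s sμ μ ∧
    Measure.map r sμ ≤ ENNReal.ofReal (Real.exp β) • μ ∧
    ∀ B : Set V, MeasurableSet B → (∀ v ∈ B, RegularVertex r v) →
      Measure.map r sμ B = ENNReal.ofReal (Real.exp β) * μ B

end Measures

section BPathN

variable [TopologicalSpace V] [TopologicalSpace E]

/-- The `n`-th boundary path space `∂Eₙ = E⁰_sng ⊔ ⋯ ⊔ E^{n-1}_sng ⊔ E^n`. -/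
def BPathN (n : ℕ) : Type u :=
  {p : FinPath r s // p.1 ≤ n ∧ (p.1 < n → ¬ RegularVertex r (srcFin r s p.2))}

/-- Cylinder sets in `∂Eₙ`. -/
def ZNSet (n : ℕ) (S : Set (FinPath r s)) : Set (BPathN r s n) :=
  {x | ∃ (k : ℕ) (h : k ≤ x.val.1), ftrunc r s x.val k h ∈ S}

instance instTopBPathN (n : ℕ) : TopologicalSpace (BPathN r s n) :=
  TopologicalSpace.generateFrom
    {A | ∃ (U K : Set (FinPath r s)), IsOpen U ∧ IsCompact K ∧
      A = ZNSet r s n U \ ZNSet r s n K}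

noncomputable instance instMeasBPathN (n : ℕ) : MeasurableSpace (BPathN r s n) := borel _

/-- The map `ρₙ : ∂Eₙ₊₁ → ∂Eₙ`, truncating paths of length `n+1` and fixing shorter paths. -/
def rho (n : ℕ) (x : BPathN r s (n + 1)) : BPathN r s n :=
  if h : x.val.1 = n + 1 then
    ⟨ftrunc r s x.val n (by omega), ⟨le_refl n, fun hlt => absurd hlt (lt_irrefl n)⟩⟩
  else
    ⟨x.val, ⟨by have := x.property.1; omega, fun hlt => x.property.2 (by omega)⟩⟩

end BPathN

/-- The periodicity group of a boundary path. -/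
def Per (x : BPathCarrier r s) : Set ℤ :=
  {z | ∃ k l : ℕ, (k : ℕ∞) ≤ blen r s x ∧ (l : ℕ∞) ≤ blen r s x ∧
    z = (k : ℤ) - (l : ℤ) ∧ (shiftC r s)^[k] x = (shiftC r s)^[l] x}

section Gpd

variable [TopologicalSpace V] [TopologicalSpace E]

/-- The graph groupoid `𝒢_E`, as a set of triples. -/
def GraphGpd : Set (BPath r s × ℤ × BPath r s) :=
  {t | ∃ k l : ℕ, (k : ℕ∞) ≤ blen r s t.1.val ∧ (l : ℕ∞) ≤ blen r s t.2.2.val ∧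
    t.2.1 = (k : ℤ) - (l : ℤ) ∧ (shiftC r s)^[k] t.1.val = (shiftC r s)^[l] t.2.2.val}

end Gpd

/-- The infinite path `c^∞` obtained by repeating a cycle `c`. -/
def cycInf {m : ℕ} (c : PathN r s (m + 1)) (hc : rngFin r s c = srcFin r s c) :
    PathInf r s :=
  ⟨fun i => c.1 ⟨i % (m + 1), Nat.mod_lt i (Nat.succ_pos m)⟩, by
    intro i
    have hlt : i % (m + 1) < m + 1 := Nat.mod_lt i (Nat.succ_pos m)
    show s (c.1 ⟨i % (m + 1), Nat.mod_lt i (Nat.succ_pos m)⟩) =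
      r (c.1 ⟨(i + 1) % (m + 1), Nat.mod_lt (i + 1) (Nat.succ_pos m)⟩)
    by_cases h1 : i % (m + 1) < m
    · have key : (i + 1) % (m + 1) = i % (m + 1) + 1 := by
        conv_lhs => rw [← Nat.div_add_mod i (m + 1)]
        rw [Nat.add_assoc, Nat.mul_add_mod, Nat.mod_eq_of_lt (by omega)]
      exact c.2 _ _ key
    · have h2 : i % (m + 1) = m := by omega
      have key : (i + 1) % (m + 1) = 0 := by
        conv_lhs => rw [← Nat.div_add_mod i (m + 1)]
        rw [Nat.add_assoc, Nat.mul_add_mod, h2, Nat.mod_self]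
      have e1 : (⟨i % (m + 1), Nat.mod_lt i (Nat.succ_pos m)⟩ : Fin (m + 1)) =
          ⟨m, Nat.lt_succ_self m⟩ := Fin.ext h2
      have e2 : (⟨(i + 1) % (m + 1), Nat.mod_lt (i + 1) (Nat.succ_pos m)⟩ : Fin (m + 1)) =
          ⟨0, Nat.succ_pos m⟩ := Fin.ext key
      rw [e1, e2]
      exact hc.symm⟩

/-- Prepending a finite path `b` to an infinite path `d` with `s(b) = r(d)`. -/
def prepend : ∀ {n : ℕ} (b : PathN r s n) (d : PathInf r s),
    srcFin r s b = r (d.1 0) → PathInf r s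
  | 0, _, d, _ => d
  | n + 1, b, d, h =>
    ⟨fun i => if h' : i < n + 1 then b.1 ⟨i, h'⟩ else d.1 (i - (n + 1)), by
      intro i
      show s (if h' : i < n + 1 then b.1 ⟨i, h'⟩ else d.1 (i - (n + 1))) =
        r (if h' : i + 1 < n + 1 then b.1 ⟨i + 1, h'⟩ else d.1 (i + 1 - (n + 1)))
      by_cases h1 : i + 1 < n + 1
      · rw [dif_pos (by omega : i < n + 1), dif_pos h1]
        exact b.2 ⟨i, by omega⟩ ⟨i + 1, h1⟩ rfl
      · by_cases h2 : i < n + 1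
        · rw [dif_pos h2, dif_neg h1]
          have hi : i = n := by omega
          have h0 : i + 1 - (n + 1) = 0 := by omega
          have e : (⟨i, h2⟩ : Fin (n + 1)) = ⟨n, Nat.lt_succ_self n⟩ := Fin.ext hi
          rw [h0, e]
          exact h
        · rw [dif_neg h2, dif_neg h1]
          have h3 : i + 1 - (n + 1) = (i - (n + 1)) + 1 := by omega
          rw [h3]
          exact d.2 (i - (n + 1))⟩

/-- `b` ends with `c`: `b = a·c` for some finite path `a`. -/
def EndsWith {n m : ℕ} (b : PathN r s n) (c : PathN r s m) : Prop :=
  ∃ h : m ≤ n, ∀ i : Fin m,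
    edgeOf r s b ⟨n - m + (i : ℕ), by have := i.isLt; omega⟩ = edgeOf r s c i

/-- `x` is eventually cyclic with cycle of length `m + 1`: `x = b c^∞` for a cycle `c` of
length `m+1` and an exit `b` of `c`. -/
def EvCyclicWitness (x : BPathCarrier r s) (m : ℕ) : Prop :=
  ∃ (c : PathN r s (m + 1)) (hc : rngFin r s c = srcFin r s c)
    (k : ℕ) (b : PathN r s k)
    (hlink : srcFin r s b = r ((cycInf r s c hc).1 0)),
    srcFin r s b = rngFin r s c ∧ ¬ EndsWith r s b c ∧
    x = Sum.inr (prepend r s b (cycInf r s c hc) hlink)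

/-!
Cylinders over levels `n ≤ m` intersect in a cylinder over level `m`, because truncation
`E^m → E^n` is continuous. Each `Z(B)` with `B ⊆ E^n` Borel is Borel: `Z(U)` is open for open `U`,
and `B ↦ Z(B)` commutes with countable unions and with complements inside `Z(E^n)`.
Conversely, `Z(S)` is the countable union of the cylinders over the levels of `S`, so every basic
open set `Z(U) \ Z(K)` lies in `σ(𝒞)`. This is enough because `∂E` is second countable: if
`x ∉ Z(K)`, the compact set `K` misses the closed set of truncations of `x`, so it can be enlarged
to one of countably many compact sets (closures of finite unions of basic open sets of `E*`) that
still misses it.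
-/

theorem exists_countable_isCompact_between {X : Type*} [TopologicalSpace X]
    [SecondCountableTopology X] [LocallyCompactSpace X] [RegularSpace X] :
    ∃ 𝒦 : Set (Set X), 𝒦.Countable ∧ (∀ K ∈ 𝒦, IsCompact K) ∧
      ∀ K U : Set X, IsCompact K → IsOpen U → K ⊆ U → ∃ K' ∈ 𝒦, K ⊆ K' ∧ K' ⊆ U := by
  obtain ⟨B, hBc, -, hB⟩ := TopologicalSpace.exists_countable_basis X
  refine ⟨{K' ∈ (fun S => closure (⋃₀ S)) '' {S | S.Finite ∧ S ⊆ B} | IsCompact K'},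
    ((countable_ofPred_finite_subset hBc).image _).mono (sep_subset _ _),
    fun K' hK' => hK'.2, fun K U hK hU hKU => ?_⟩
  obtain ⟨W, hW, hKW, hWU, hWc⟩ := exists_open_between_and_isCompact_closure hK hU hKU
  obtain ⟨S, hSB, hSfin, hKS⟩ := hK.elim_finite_subcover_image
    (fun V (hV : V ∈ {V ∈ B | V ⊆ W}) => hB.isOpen hV.1)
    (by rw [← sUnion_eq_biUnion, ← hB.open_eq_sUnion' hW]; exact hKW)
  have hSW : closure (⋃₀ S) ⊆ closure W :=
    closure_mono (sUnion_subset fun V hV => (hSB hV).2)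
  exact ⟨closure (⋃₀ S),
    ⟨⟨S, ⟨hSfin, fun V hV => (hSB hV).1⟩, rfl⟩, hWc.of_isClosed_subset isClosed_closure hSW⟩,
    (sUnion_eq_biUnion ▸ hKS).trans subset_closure, hSW.trans hWU⟩

instance _root_.Sigma.locallyCompactSpace {ι : Type*} {X : ι → Type*}
    [∀ i, TopologicalSpace (X i)] [∀ i, LocallyCompactSpace (X i)] :
    LocallyCompactSpace (Σ i, X i) where
  local_compact_nhds := by
    rintro ⟨i, x⟩ N hN
    have hmap := (Topology.IsOpenEmbedding.sigmaMk (σ := X) (i := i)).map_nhds_eq x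
    rw [← hmap] at hN ⊢
    obtain ⟨C, hC, hCN, hCc⟩ := local_compact_nhds hN
    exact ⟨Sigma.mk i '' C, Filter.image_mem_map hC, image_subset_iff.2 hCN,
      hCc.image continuous_sigmaMk⟩

section PathSpaces

variable [TopologicalSpace V] [TopologicalSpace E]

theorem isClosed_setOf_comp [T2Space V] (hr : Continuous r) (hs : Continuous s) (n : ℕ) :
    IsClosed {a : Fin n → E | Comp r s n a} := by
  simp only [Comp, ofPred_forall]
  exact isClosed_iInter fun i => isClosed_iInter fun j => isClosed_iInter fun _ =>
    isClosed_eq (hs.comp (continuous_apply i)) (hr.comp (continuous_apply j))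

instance instT2SpacePathN [T2Space V] [T2Space E] : ∀ n, T2Space (PathN r s n)
  | 0 => inferInstanceAs (T2Space V)
  | n + 1 => inferInstanceAs (T2Space {a : Fin (n + 1) → E // Comp r s (n + 1) a})

instance instSecondCountableTopologyPathN [SecondCountableTopology V]
    [SecondCountableTopology E] : ∀ n, SecondCountableTopology (PathN r s n)
  | 0 => inferInstanceAs (SecondCountableTopology V)
  | n + 1 => TopologicalSpace.secondCountableTopology_induced _ _
      (Subtype.val : {a : Fin (n + 1) → E // Comp r s (n + 1) a} → Fin (n + 1) → E)

instance instT2SpaceFinPath [T2Space V] [T2Space E] : T2Space (FinPath r s) :=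
  inferInstanceAs (T2Space (Σ n, PathN r s n))

instance instSecondCountableTopologyFinPath [SecondCountableTopology V]
    [SecondCountableTopology E] : SecondCountableTopology (FinPath r s) :=
  inferInstanceAs (SecondCountableTopology (Σ n, PathN r s n))

instance instBorelSpacePathN (n : ℕ) : BorelSpace (PathN r s n) := ⟨rfl⟩

instance instBorelSpaceBPath : BorelSpace (BPath r s) := ⟨rfl⟩

theorem locallyCompactSpace_pathN [T2Space V] [LocallyCompactSpace V] [LocallyCompactSpace E]
    (hr : Continuous r) (hs : Continuous s) : ∀ n, LocallyCompactSpace (PathN r s n)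
  | 0 => inferInstanceAs (LocallyCompactSpace V)
  | n + 1 => (isClosed_setOf_comp r s hr hs (n + 1)).locallyCompactSpace

theorem locallyCompactSpace_finPath [T2Space V] [LocallyCompactSpace V] [LocallyCompactSpace E]
    (hr : Continuous r) (hs : Continuous s) : LocallyCompactSpace (FinPath r s) :=
  have := locallyCompactSpace_pathN r s hr hs
  inferInstanceAs (LocallyCompactSpace (Σ n, PathN r s n))

theorem continuous_truncFin (hr : Continuous r) :
    ∀ {m n : ℕ} (h : n ≤ m), Continuous (truncFin r s h : PathN r s m → PathN r s n)
  | 0, 0, _ => continuous_id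
  | _ + 1, 0, _ => hr.comp ((continuous_apply _).comp continuous_subtype_val)
  | 0, _ + 1, h => absurd h (by omega)
  | _ + 1, _ + 1, h => continuous_induced_rng.mpr <|
      continuous_pi fun i => (continuous_apply (Fin.castLE h i)).comp continuous_subtype_val

end PathSpaces

theorem truncFin_truncFin : ∀ {m n k : ℕ} (h₁ : k ≤ n) (h₂ : n ≤ m) (q : PathN r s m),
    truncFin r s h₁ (truncFin r s h₂ q) = truncFin r s (h₁.trans h₂) q
  | 0, 0, 0, _, _, _ => rfl
  | _ + 1, 0, 0, _, _, _ => rfl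
  | _ + 1, _ + 1, 0, _, _, _ => rfl
  | _ + 1, _ + 1, _ + 1, _, _, _ => rfl
  | 0, _ + 1, _, _, h₂, _ => absurd h₂ (by omega)
  | _, 0, _ + 1, h₁, _, _ => absurd h₁ (by omega)

theorem truncFin_truncInf (a : PathInf r s) :
    ∀ {n k : ℕ} (h : k ≤ n), truncFin r s h (truncInf r s a n) = truncInf r s a k
  | 0, 0, _ => rfl
  | _ + 1, 0, _ => rfl
  | _ + 1, _ + 1, _ => rfl
  | 0, _ + 1, h => absurd h (by omega)

/-- The truncation `x(n) ∈ E^n` of a boundary path; `btrunc` is its image in `E*`. -/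
def truncN : ∀ (x : BPathCarrier r s) (n : ℕ), (n : ℕ∞) ≤ blen r s x → PathN r s n
  | .inl p, _, h => truncFin r s (Nat.cast_le.mp h) p.2
  | .inr a, n, _ => truncInf r s a n

theorem btrunc_eq_mk (x : BPathCarrier r s) (n : ℕ) (h : (n : ℕ∞) ≤ blen r s x) :
    btrunc r s x n h = ⟨n, truncN r s x n h⟩ := by
  cases x <;> rfl

theorem truncN_of_le (x : BPathCarrier r s) {k n : ℕ} (hkn : k ≤ n)
    (hk : (k : ℕ∞) ≤ blen r s x) (hn : (n : ℕ∞) ≤ blen r s x) :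
    truncN r s x k hk = truncFin r s hkn (truncN r s x n hn) := by
  cases x with
  | inl p => exact (truncFin_truncFin r s hkn _ p.2).symm
  | inr a => exact (truncFin_truncInf r s a hkn).symm

def truncSet (x : BPathCarrier r s) : Set (FinPath r s) :=
  {p | ∃ n h, btrunc r s x n h = p}

section Cylinders

variable [TopologicalSpace V] [TopologicalSpace E]

theorem mem_ZSet_iff {S : Set (FinPath r s)} {x : BPath r s} :
    x ∈ ZSet r s S ↔ (S ∩ truncSet r s x.val).Nonempty :=
  ⟨fun ⟨n, h, hS⟩ => ⟨_, hS, n, h, rfl⟩, fun ⟨_, hS, n, h, hp⟩ => ⟨n, h, hp ▸ hS⟩⟩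

theorem mem_ZSet_image_mk_iff {n : ℕ} {B : Set (PathN r s n)} {x : BPath r s} :
    x ∈ ZSet r s (Sigma.mk n '' B) ↔ ∃ h : (n : ℕ∞) ≤ blen r s x.val, truncN r s x.val n h ∈ B := by
  constructor
  · rintro ⟨k, h, b, hb, heq⟩
    rw [btrunc_eq_mk] at heq
    obtain rfl : n = k := congrArg Sigma.fst heq
    exact ⟨h, sigma_mk_injective heq ▸ hb⟩
  · rintro ⟨h, hb⟩
    exact ⟨n, h, by rw [btrunc_eq_mk]; exact mem_image_of_mem _ hb⟩

theorem ZSet_mono {S T : Set (FinPath r s)} (h : S ⊆ T) : ZSet r s S ⊆ ZSet r s T :=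
  fun _ ⟨n, hn, hS⟩ => ⟨n, hn, h hS⟩

theorem ZSet_iUnion {ι : Sort*} (S : ι → Set (FinPath r s)) :
    ZSet r s (⋃ i, S i) = ⋃ i, ZSet r s (S i) := by
  ext x
  simp only [ZSet, mem_iUnion, mem_ofPred_eq]
  exact ⟨fun ⟨n, h, i, hi⟩ => ⟨i, n, h, hi⟩, fun ⟨i, n, h, hi⟩ => ⟨n, h, i, hi⟩⟩

theorem ZSet_eq_iUnion_image_mk (S : Set (FinPath r s)) :
    ZSet r s S = ⋃ n : ℕ, ZSet r s (Sigma.mk n '' (Sigma.mk n ⁻¹' S)) := by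
  rw [← ZSet_iUnion]
  congr 1
  ext p
  simp only [mem_iUnion]
  exact ⟨fun h => ⟨p.1, p.2, h, rfl⟩, by rintro ⟨_, _, h, rfl⟩; exact h⟩

theorem ZSet_image_mk_compl (n : ℕ) (B : Set (PathN r s n)) :
    ZSet r s (Sigma.mk n '' Bᶜ) = ZSet r s (Sigma.mk n '' univ) \ ZSet r s (Sigma.mk n '' B) := by
  ext x
  simp only [mem_sdiff, mem_ZSet_image_mk_iff, mem_univ, mem_compl_iff]
  exact ⟨fun ⟨h, hB⟩ => ⟨⟨h, trivial⟩, fun ⟨_, hB'⟩ => hB hB'⟩,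
    fun ⟨⟨h, _⟩, hB⟩ => ⟨h, fun hB' => hB ⟨h, hB'⟩⟩⟩

theorem ZSet_image_mk_inter {n m : ℕ} (hnm : n ≤ m) (B : Set (PathN r s n))
    (C : Set (PathN r s m)) :
    ZSet r s (Sigma.mk n '' B) ∩ ZSet r s (Sigma.mk m '' C) =
      ZSet r s (Sigma.mk m '' (truncFin r s hnm ⁻¹' B ∩ C)) := by
  ext x
  simp only [mem_inter_iff, mem_ZSet_image_mk_iff, mem_preimage]
  constructor
  · rintro ⟨⟨hn, hB⟩, hm, hC⟩
    exact ⟨hm, truncN_of_le r s x.val hnm hn hm ▸ hB, hC⟩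
  · rintro ⟨hm, hB, hC⟩
    have hn : (n : ℕ∞) ≤ blen r s x.val := le_trans (by exact_mod_cast hnm) hm
    exact ⟨⟨hn, truncN_of_le r s x.val hnm hn hm ▸ hB⟩, hm, hC⟩

theorem isOpen_ZSet {U : Set (FinPath r s)} (hU : IsOpen U) : IsOpen (ZSet r s U) := by
  have hZ : ZSet r s (∅ : Set (FinPath r s)) = ∅ := by ext; simp [ZSet]
  have hbasic : IsOpen (ZSet r s U \ ZSet r s ∅) :=
    TopologicalSpace.GenerateOpen.basic _ ⟨U, ∅, hU, isCompact_empty, rfl⟩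
  rwa [hZ, sdiff_empty] at hbasic

/-- Each level of `E*` contains at most one truncation of `x`. -/
theorem isClosed_truncSet [T2Space V] [T2Space E] (x : BPathCarrier r s) :
    IsClosed (truncSet r s x) := by
  have hfst : ∀ n h, (btrunc r s x n h).1 = n := by cases x <;> intros <;> rfl
  refine isClosed_sigma_iff.2 fun n => Set.Subsingleton.isClosed ?_
  rintro q ⟨k, hk, hq⟩ q' ⟨k', hk', hq'⟩
  obtain rfl : k = n := (hfst k hk).symm.trans (congrArg Sigma.fst hq)
  obtain rfl : k' = k := (hfst k' hk').symm.trans (congrArg Sigma.fst hq')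
  exact sigma_mk_injective (hq.symm.trans hq')

theorem secondCountableTopology_bPath [T2Space V] [T2Space E] [LocallyCompactSpace V]
    [LocallyCompactSpace E] [SecondCountableTopology V] [SecondCountableTopology E]
    (hr : Continuous r) (hs : Continuous s) : SecondCountableTopology (BPath r s) := by
  have := locallyCompactSpace_finPath r s hr hs
  obtain ⟨B, hBc, -, hB⟩ := TopologicalSpace.exists_countable_basis (FinPath r s)
  obtain ⟨𝒦, h𝒦c, h𝒦K, h𝒦⟩ := exists_countable_isCompact_between (X := FinPath r s)
  refine ⟨⟨image2 (fun U K => ZSet r s U \ ZSet r s K) B 𝒦, hBc.image2 h𝒦c _,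
    le_antisymm ?_ ?_⟩⟩
  · rw [TopologicalSpace.le_generateFrom_iff_subset_isOpen]
    rintro _ ⟨U, hU, K, hK, rfl⟩
    exact TopologicalSpace.GenerateOpen.basic _ ⟨U, K, hB.isOpen hU, h𝒦K K hK, rfl⟩
  · rw [instTopBPath, TopologicalSpace.le_generateFrom_iff_subset_isOpen]
    rintro _ ⟨U, K, hU, hK, rfl⟩
    refine (@isOpen_iff_forall_mem_open (BPath r s) (.generateFrom _) _).2 ?_
    rintro x ⟨⟨n, hn, hxU⟩, hxK⟩
    obtain ⟨W, hWB, hxW, hWU⟩ := hB.exists_subset_of_mem_open hxU hU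
    obtain ⟨K', hK', hKK', hK'x⟩ := h𝒦 K _ hK (isClosed_truncSet r s x.val).isOpen_compl
      fun p hpK hpx => hxK ((mem_ZSet_iff r s).2 ⟨p, hpK, hpx⟩)
    refine ⟨ZSet r s W \ ZSet r s K', sdiff_subset_sdiff (ZSet_mono r s hWU) (ZSet_mono r s hKK'),
      TopologicalSpace.isOpen_generateFrom_of_mem ⟨W, hWB, K', hK', rfl⟩, ⟨n, hn, hxW⟩,
      fun hx => ?_⟩
    obtain ⟨p, hpK', hpx⟩ := (mem_ZSet_iff r s).1 hx
    exact hK'x hpK' hpx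

end Cylinders

section CylinderSets

variable [TopologicalSpace V] [TopologicalSpace E]

def cylinderSets : Set (Set (BPath r s)) :=
  {C | ∃ (n : ℕ) (B : Set (PathN r s n)), MeasurableSet B ∧ C = ZSet r s (Sigma.mk n '' B)}

theorem isPiSystem_cylinderSets (hr : Continuous r) : IsPiSystem (cylinderSets r s) := by
  rintro _ ⟨n, B, hB, rfl⟩ _ ⟨m, C, hC, rfl⟩ -
  rcases le_total n m with hnm | hmn
  · exact ⟨m, _, ((continuous_truncFin r s hr hnm).measurable hB).inter hC,
      ZSet_image_mk_inter r s hnm B C⟩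
  · rw [inter_comm]
    exact ⟨n, _, ((continuous_truncFin r s hr hmn).measurable hC).inter hB,
      ZSet_image_mk_inter r s hmn C B⟩

theorem measurableSet_ZSet_image_mk {n : ℕ} {B : Set (PathN r s n)} (hB : MeasurableSet B) :
    MeasurableSet (ZSet r s (Sigma.mk n '' B)) := by
  induction B, hB using MeasurableSet.induction_on_open with
  | isOpen U hU => exact (isOpen_ZSet r s (isOpenMap_sigmaMk U hU)).measurableSet
  | compl B _ hZ =>
    rw [ZSet_image_mk_compl]
    exact (isOpen_ZSet r s (isOpenMap_sigmaMk _ isOpen_univ)).measurableSet.diff hZ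
  | iUnion f _ _ hZ =>
    convert MeasurableSet.iUnion hZ using 1
    exact (congrArg (ZSet r s) image_iUnion).trans (ZSet_iUnion r s _)

theorem measurableSet_generateFrom_cylinderSets_ZSet {S : Set (FinPath r s)}
    (hS : ∀ n, MeasurableSet (Sigma.mk n ⁻¹' S)) :
    MeasurableSet[MeasurableSpace.generateFrom (cylinderSets r s)] (ZSet r s S) := by
  rw [ZSet_eq_iUnion_image_mk]
  exact .iUnion fun n => MeasurableSpace.measurableSet_generateFrom ⟨n, _, hS n, rfl⟩

theorem generateFrom_cylinderSets_eq_borel [T2Space V] [T2Space E] [LocallyCompactSpace V]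
    [LocallyCompactSpace E] [SecondCountableTopology V] [SecondCountableTopology E]
    (hr : Continuous r) (hs : Continuous s) :
    MeasurableSpace.generateFrom (cylinderSets r s) = borel (BPath r s) := by
  have := secondCountableTopology_bPath r s hr hs
  refine le_antisymm (MeasurableSpace.generateFrom_le ?_) ?_
  · rintro _ ⟨n, B, hB, rfl⟩
    exact measurableSet_ZSet_image_mk r s hB
  · rw [borel_eq_generateFrom_of_subbasis rfl]
    refine MeasurableSpace.generateFrom_le ?_
    rintro _ ⟨U, K, hU, hK, rfl⟩
    exact (measurableSet_generateFrom_cylinderSets_ZSet r s fun n =>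
        (hU.preimage continuous_sigmaMk).measurableSet).diff
      (measurableSet_generateFrom_cylinderSets_ZSet r s fun n =>
        (hK.isClosed.preimage continuous_sigmaMk).measurableSet)

end CylinderSets

/-- For a second-countable topological graph, the collection
`𝒞 = {Z(B) : B ⊆ E^n Borel, n ∈ ℕ}` is a π-system generating the Borel σ-algebra
of the boundary path space `∂E`. -/
theorem stmt10 {V E : Type u} (r s : E → V) [TopologicalSpace V] [TopologicalSpace E]
    [T2Space V] [T2Space E] [LocallyCompactSpace V] [LocallyCompactSpace E]
    [SecondCountableTopology V] [SecondCountableTopology E]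
    (hr : Continuous r) (hs : IsLocalHomeomorph s) :
    IsPiSystem {C : Set (BPath r s) | ∃ (n : ℕ) (B : Set (PathN r s n)),
      MeasurableSet B ∧ C = ZSet r s (Sigma.mk n '' B)} ∧
    MeasurableSpace.generateFrom {C : Set (BPath r s) | ∃ (n : ℕ) (B : Set (PathN r s n)),
      MeasurableSet B ∧ C = ZSet r s (Sigma.mk n '' B)} = borel (BPath r s) :=
  ⟨isPiSystem_cylinderSets r s hr, generateFrom_cylinderSets_eq_borel r s hr hs.continuous⟩

end TopGraph
end

section
/- Let E be a topological graph. The graph groupoid 𝒢_E = { (a, k−l, b) : k, l ≥ 0, k ≤ |a|, l ≤ |b|, σᵏ(a) = σˡ(b) } is principal (all isotropy groups are trivial) if and only if E contains no cycles. -/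
/-!
Isotropy at `a` is the periodicity group `Per(a)`: `(a, k - l, a) ∈ 𝒢_E` iff `σᵏ a = σˡ a`.
Since `σᵏ` shortens a finite path `p` to length `|p| - k`, finite paths are aperiodic. For an
infinite path `d`, `σᵏ d = σˡ d` with `k < l` makes the segment `d_k ⋯ d_{l-1}` a cycle.
Conversely a cycle `c` yields the boundary path `c^∞`, whose period `|c|` is nonzero.
-/

open MeasureTheory Set

namespace TopGraph

universe u
variable {V E : Type u} (r s : E → V)

def shiftInf (k : ℕ) (d : PathInf r s) : PathInf r s :=
  ⟨fun i => d.1 (i + k), fun i => by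
    show s (d.1 (i + k)) = r (d.1 (i + 1 + k))
    rw [Nat.add_right_comm]
    exact d.2 (i + k)⟩

lemma shiftC_iterate_inr (k : ℕ) (d : PathInf r s) :
    (shiftC r s)^[k] (Sum.inr d) = Sum.inr (shiftInf r s k d) := by
  induction k generalizing d with
  | zero => rfl
  | succ k ih => exact ih ⟨fun i => d.1 (i + 1), fun i => d.2 (i + 1)⟩

lemma shiftF_fst (p : FinPath r s) : (shiftF r s p).1 = p.1 - 1 := by
  rcases p with ⟨_ | _ | n, q⟩ <;> rfl

lemma shiftF_iterate_fst (k : ℕ) (p : FinPath r s) :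
    ((shiftF r s)^[k] p).1 = p.1 - k := by
  induction k generalizing p with
  | zero => rfl
  | succ k ih =>
    rw [Function.iterate_succ_apply, ih, shiftF_fst]
    omega

lemma shiftC_iterate_inl (k : ℕ) (p : FinPath r s) :
    (shiftC r s)^[k] (Sum.inl p) = Sum.inl ((shiftF r s)^[k] p) := by
  induction k generalizing p with
  | zero => rfl
  | succ k ih => exact ih (shiftF r s p)

lemma mem_graphGpd_self_iff [TopologicalSpace V] [TopologicalSpace E] (a : BPath r s) (z : ℤ) :
    (a, z, a) ∈ GraphGpd r s ↔ z ∈ Per r s a.val :=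
  Iff.rfl

lemma per_inl_eq_zero {p : FinPath r s} {z : ℤ} (hz : z ∈ Per r s (Sum.inl p)) : z = 0 := by
  obtain ⟨k, l, hk, hl, rfl, heq⟩ := hz
  simp only [blen, Nat.cast_le] at hk hl
  rw [shiftC_iterate_inl, shiftC_iterate_inl] at heq
  have hlen := congrArg Sigma.fst (Sum.inl.inj heq)
  rw [shiftF_iterate_fst, shiftF_iterate_fst] at hlen
  omega

lemma exists_cycle_of_shiftInf_eq {d : PathInf r s} {k l : ℕ} (hkl : k < l)
    (hper : shiftInf r s k d = shiftInf r s l d) :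
    ∃ (m : ℕ) (c : PathN r s (m + 1)), rngFin r s c = srcFin r s c := by
  refine ⟨l - k - 1, ⟨fun i => d.1 (k + i), fun i j hij => ?_⟩, ?_⟩
  · show s (d.1 (k + i)) = r (d.1 (k + j))
    rw [hij, ← Nat.add_assoc]
    exact d.2 (k + i)
  · have hd0 : d.1 k = d.1 l := by
      simpa [shiftInf] using congrFun (congrArg Subtype.val hper) 0
    show r (d.1 (k + 0)) = s (d.1 (k + (l - k - 1)))
    rw [d.2, Nat.add_zero, hd0, show k + (l - k - 1) + 1 = l by omega]

lemma per_inr_eq_zero {d : PathInf r s}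
    (hnc : ¬ ∃ (m : ℕ) (c : PathN r s (m + 1)), rngFin r s c = srcFin r s c)
    {z : ℤ} (hz : z ∈ Per r s (Sum.inr d)) : z = 0 := by
  obtain ⟨k, l, -, -, rfl, heq⟩ := hz
  rw [shiftC_iterate_inr, shiftC_iterate_inr] at heq
  replace heq := Sum.inr.inj heq
  rcases lt_trichotomy k l with hkl | rfl | hlk
  · exact absurd (exists_cycle_of_shiftInf_eq r s hkl heq) hnc
  · exact sub_self _
  · exact absurd (exists_cycle_of_shiftInf_eq r s hlk heq.symm) hnc

lemma shiftInf_cycInf {m : ℕ} (c : PathN r s (m + 1)) (hc : rngFin r s c = srcFin r s c) :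
    shiftInf r s (m + 1) (cycInf r s c hc) = cycInf r s c hc := by
  apply Subtype.ext
  funext i
  show c.1 ⟨(i + (m + 1)) % (m + 1), _⟩ = c.1 ⟨i % (m + 1), _⟩
  simp only [Nat.add_mod_right]

lemma length_mem_per_cycInf {m : ℕ} (c : PathN r s (m + 1))
    (hc : rngFin r s c = srcFin r s c) :
    ((m + 1 : ℕ) : ℤ) ∈ Per r s (Sum.inr (cycInf r s c hc)) :=
  ⟨m + 1, 0, le_top, le_top, by simp, by rw [shiftC_iterate_inr, shiftInf_cycInf]; rfl⟩

theorem stmt12_general {V E : Type u} (r s : E → V) [TopologicalSpace V] [TopologicalSpace E] :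
    (∀ (a : BPath r s) (z : ℤ), (a, z, a) ∈ GraphGpd r s → z = 0) ↔
      ¬ ∃ (m : ℕ) (c : PathN r s (m + 1)), rngFin r s c = srcFin r s c := by
  simp only [mem_graphGpd_self_iff]
  constructor
  · rintro hprincipal ⟨m, c, hc⟩
    have hper := hprincipal ⟨Sum.inr (cycInf r s c hc), fun p hp => by cases hp⟩ _
      (length_mem_per_cycInf r s c hc)
    omega
  · rintro hnc ⟨x, _⟩ z hz
    cases x with
    | inl p => exact per_inl_eq_zero r s hz
    | inr d => exact per_inr_eq_zero r s hnc hz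

/-- The graph groupoid `𝒢_E` is principal (trivial isotropy: `(a, z, a) ∈ 𝒢_E`
implies `z = 0`) if and only if the topological graph `E` contains no cycles. -/
theorem stmt12 {V E : Type u} (r s : E → V) [TopologicalSpace V] [TopologicalSpace E]
    [T2Space V] [T2Space E] [LocallyCompactSpace V] [LocallyCompactSpace E]
    (hr : Continuous r) (hs : IsLocalHomeomorph s) :
    (∀ (a : BPath r s) (z : ℤ), (a, z, a) ∈ GraphGpd r s → z = 0) ↔
      ¬ ∃ (m : ℕ) (c : PathN r s (m + 1)), rngFin r s c = srcFin r s c :=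
  stmt12_general r s

end TopGraph
end
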